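/- Let K, σ, S > 0 and r ∈ ℝ. For t̃ > 0 define d₁(t̃) = (log(S/K) + (r + σ²/2) t̃²)/(σ t̃), d₂(t̃) = d₁(t̃) − σ t̃, and the time-changed Black–Scholes call value C̃(t̃) = S Φ(d₁(t̃)) − K e^{−r t̃²} Φ(d₂(t̃)), where Φ is the standard normal cumulative distribution function and φ its density. Then C̃ is differentiable on (0, ∞) with C̃′(t̃) = S σ φ(d₁(t̃)) + 2 t̃ r K e^{−r t̃²} Φ(d₂(t̃)), and C̃′ has a finite limit as t̃ → 0⁺ (equal to 0 if S ≠ K, and to Sσ/√(2π) if S = K); in particular the time-changed theta is not singular at t̃ = 0. -/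

import Mathlib

/-- The standard normal cumulative distribution function
`Φ(x) = (2π)^{-1/2} ∫_{-∞}^x e^{-u²/2} du`. -/
noncomputable def stdCDF (x : ℝ) : ℝ :=
  (Real.sqrt (2 * Real.pi))⁻¹ * ∫ u in Set.Iic x, Real.exp (-u ^ 2 / 2)

/-- The standard normal density `φ(x) = (2π)^{-1/2} e^{-x²/2}`. -/
noncomputable def stdPDF (x : ℝ) : ℝ :=
  (Real.sqrt (2 * Real.pi))⁻¹ * Real.exp (-x ^ 2 / 2)


/-!
By the chain rule, the derivative of `S Φ(d₁) - K e^{-rt²} Φ(d₂)` contains `d₁'` only through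
`(S φ(d₁) - K e^{-rt²} φ(d₂)) d₁'`, and this vanishes: completing the square with
`σ t d₁ = log (S / K) + (r + σ² / 2) t²` gives `K e^{-rt²} φ(d₂) = S φ(d₁)`.
For the limit write `d₁ t = a / t + b t` with `a = log (S / K) / σ`. If `S ≠ K` then `a ≠ 0`,
so `|d₁| → ∞` and `φ(d₁) → 0`; if `S = K` then `d₁ → 0` and `φ(d₁) → 1 / √(2π)`. The other
term of the derivative is `O(t)` because `Φ` is bounded.
-/

open Real Filter Topology Set MeasureTheory

theorem hasDerivAt_integral_Iic {f : ℝ → ℝ} (hf : Integrable f) (hcont : Continuous f) (x : ℝ) :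
    HasDerivAt (fun y => ∫ u in Iic y, f u) (f x) x := by
  have hsplit : ∀ y, ∫ u in Iic y, f u = (∫ u in Iic x, f u) + ∫ u in x..y, f u := fun y => by
    rw [← intervalIntegral.integral_Iic_sub_Iic hf.integrableOn hf.integrableOn, add_sub_cancel]
  exact ((intervalIntegral.integral_hasDerivAt_right hf.intervalIntegrable
    (hcont.stronglyMeasurableAtFilter _ _) hcont.continuousAt).const_add _).congr_of_eventuallyEq
    (.of_forall hsplit)

theorem exp_neg_sq_div_two_eq (u : ℝ) : exp (-u ^ 2 / 2) = exp (-(1 / 2) * u ^ 2) := by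
  ring_nf

theorem integrable_exp_neg_sq_div_two : Integrable fun u : ℝ => exp (-u ^ 2 / 2) := by
  simpa only [exp_neg_sq_div_two_eq] using integrable_exp_neg_mul_sq (b := 1 / 2) (by norm_num)

theorem integral_exp_neg_sq_div_two : ∫ u : ℝ, exp (-u ^ 2 / 2) = √(2 * π) := by
  rw [funext exp_neg_sq_div_two_eq, integral_gaussian]
  congr 1
  ring

theorem hasDerivAt_stdCDF (x : ℝ) : HasDerivAt stdCDF (stdPDF x) x :=
  (hasDerivAt_integral_Iic integrable_exp_neg_sq_div_two (by fun_prop) x).const_mul _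

theorem stdCDF_nonneg (x : ℝ) : 0 ≤ stdCDF x :=
  mul_nonneg (inv_nonneg.2 (sqrt_nonneg _))
    (setIntegral_nonneg measurableSet_Iic fun _ _ => (exp_pos _).le)

theorem stdCDF_le_one (x : ℝ) : stdCDF x ≤ 1 := by
  have hpos : 0 < √(2 * π) := sqrt_pos.2 (by positivity)
  have hle : ∫ u in Iic x, exp (-u ^ 2 / 2) ≤ √(2 * π) :=
    integral_exp_neg_sq_div_two ▸ setIntegral_le_integral integrable_exp_neg_sq_div_two
      (.of_forall fun _ => (exp_pos _).le)
  calc stdCDF x ≤ (√(2 * π))⁻¹ * √(2 * π) := mul_le_mul_of_nonneg_left hle (inv_nonneg.2 hpos.le)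
    _ = 1 := inv_mul_cancel₀ hpos.ne'

theorem abs_stdCDF_le_one (x : ℝ) : |stdCDF x| ≤ 1 :=
  abs_le.2 ⟨by linarith [stdCDF_nonneg x], stdCDF_le_one x⟩

theorem continuous_stdPDF : Continuous stdPDF := by
  unfold stdPDF
  fun_prop

theorem stdPDF_zero : stdPDF 0 = (√(2 * π))⁻¹ := by
  simp [stdPDF]

theorem stdPDF_sub (x y : ℝ) : stdPDF (x - y) = stdPDF x * exp (x * y - y ^ 2 / 2) := by
  rw [stdPDF, stdPDF, mul_assoc, ← exp_add]
  congr 2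
  ring

theorem tendsto_stdPDF_cocompact : Tendsto stdPDF (cocompact ℝ) (𝓝 0) := by
  have hsq : Tendsto (fun x : ℝ => x ^ 2) (cocompact ℝ) atTop := by
    simpa only [Function.comp_def, norm_eq_abs, sq_abs] using
      (tendsto_pow_atTop two_ne_zero).comp (tendsto_norm_cocompact_atTop (E := ℝ))
  have hexp : Tendsto (fun x : ℝ => exp (-x ^ 2 / 2)) (cocompact ℝ) (𝓝 0) :=
    (tendsto_exp_atBot.comp (tendsto_neg_atTop_atBot.comp (hsq.atTop_div_const two_pos))).congr
      fun x => by simp only [Function.comp, neg_div]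
  have := hexp.const_mul (√(2 * π))⁻¹
  rwa [mul_zero] at this

theorem tendsto_div_add_mul_nhdsGT_zero_cocompact {a : ℝ} (ha : a ≠ 0) (b : ℝ) :
    Tendsto (fun t => a / t + b * t) (𝓝[>] 0) (cocompact ℝ) := by
  have hlin : Tendsto (fun t : ℝ => b * t) (𝓝[>] 0) (𝓝 0) := by
    simpa using ((continuous_const_mul b).tendsto 0).mono_left nhdsWithin_le_nhds
  simp only [div_eq_mul_inv]
  rcases ha.lt_or_gt with hneg | hpos
  · exact ((tendsto_inv_nhdsGT_zero.const_mul_atTop_of_neg hneg).atBot_add hlin).mono_right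
      atBot_le_cocompact
  · exact ((tendsto_inv_nhdsGT_zero.const_mul_atTop hpos).atTop_add hlin).mono_right
      atTop_le_cocompact

theorem tendsto_stdPDF_div_add_mul (a b : ℝ) :
    Tendsto (fun t => stdPDF (a / t + b * t)) (𝓝[>] 0)
      (𝓝 (if a = 0 then stdPDF 0 else 0)) := by
  split_ifs with ha
  · subst ha
    simpa [Function.comp_def] using
      ((continuous_stdPDF.comp (continuous_const_mul b)).tendsto 0).mono_left nhdsWithin_le_nhds
  · exact tendsto_stdPDF_cocompact.comp (tendsto_div_add_mul_nhdsGT_zero_cocompact ha b)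

section TimeChangedBlackScholes

variable (S K r σ : ℝ)

noncomputable def timeChangedD₁ (t : ℝ) : ℝ :=
  (log (S / K) + (r + σ ^ 2 / 2) * t ^ 2) / (σ * t)

noncomputable def timeChangedCall (t : ℝ) : ℝ :=
  S * stdCDF (timeChangedD₁ S K r σ t) -
    K * exp (-r * t ^ 2) * stdCDF (timeChangedD₁ S K r σ t - σ * t)

noncomputable def timeChangedTheta (t : ℝ) : ℝ :=
  S * σ * stdPDF (timeChangedD₁ S K r σ t) +
    2 * t * r * K * exp (-r * t ^ 2) * stdCDF (timeChangedD₁ S K r σ t - σ * t)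

variable {S K r σ}

-- Also at `t = 0`, where both sides are `0` because `x / 0 = 0`.
theorem timeChangedD₁_eq (hσ : σ ≠ 0) (t : ℝ) :
    timeChangedD₁ S K r σ t = log (S / K) / σ / t + (r + σ ^ 2 / 2) / σ * t := by
  rcases eq_or_ne t 0 with rfl | ht
  · simp [timeChangedD₁]
  · rw [timeChangedD₁]
    field_simp

theorem mul_stdPDF_timeChangedD₁_sub (hS : 0 < S) (hK : 0 < K) (hσ : σ ≠ 0) {t : ℝ}
    (ht : t ≠ 0) :
    K * exp (-r * t ^ 2) * stdPDF (timeChangedD₁ S K r σ t - σ * t) =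
      S * stdPDF (timeChangedD₁ S K r σ t) := by
  have hd : timeChangedD₁ S K r σ t * (σ * t) = log (S / K) + (r + σ ^ 2 / 2) * t ^ 2 :=
    div_mul_cancel₀ _ (mul_ne_zero hσ ht)
  have hexp : K * exp (-r * t ^ 2) * exp (timeChangedD₁ S K r σ t * (σ * t) - (σ * t) ^ 2 / 2) =
      S := by
    rw [mul_assoc, ← exp_add, hd, show -r * t ^ 2 + (log (S / K) + (r + σ ^ 2 / 2) * t ^ 2 -
      (σ * t) ^ 2 / 2) = log (S / K) by ring, exp_log (div_pos hS hK), mul_div_cancel₀ _ hK.ne']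
  rw [stdPDF_sub]
  linear_combination stdPDF (timeChangedD₁ S K r σ t) * hexp

theorem hasDerivAt_timeChangedCall (hS : 0 < S) (hK : 0 < K) (hσ : σ ≠ 0) {t : ℝ}
    (ht : t ≠ 0) :
    HasDerivAt (timeChangedCall S K r σ) (timeChangedTheta S K r σ t) t := by
  obtain ⟨D, hD⟩ : ∃ D, HasDerivAt (timeChangedD₁ S K r σ) D t := by
    refine ⟨_, DifferentiableAt.hasDerivAt ?_⟩
    unfold timeChangedD₁
    fun_prop (disch := exact mul_ne_zero hσ ht)
  have hdiscount : HasDerivAt (fun s => exp (-r * s ^ 2)) (exp (-r * t ^ 2) * (-r * (2 * t))) t := by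
    simpa using ((hasDerivAt_pow 2 t).const_mul (-r)).exp
  have hd₂ := hD.sub ((hasDerivAt_id t).const_mul σ)
  have hcall := ((hasDerivAt_stdCDF _).comp t hD).const_mul S |>.sub
    ((hdiscount.const_mul K).mul ((hasDerivAt_stdCDF _).comp t hd₂))
  refine hcall.congr_deriv ?_
  simp only [timeChangedTheta, Function.comp_apply, Pi.sub_apply, id_eq, mul_one]
  -- The `d₁'` contributions of the two terms cancel.
  linear_combination (σ - D) * mul_stdPDF_timeChangedD₁_sub (r := r) hS hK hσ ht

theorem tendsto_timeChangedTheta (hS : 0 < S) (hK : 0 < K) (hσ : σ ≠ 0) :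
    Tendsto (timeChangedTheta S K r σ) (𝓝[>] 0)
      (𝓝 (if S = K then S * σ / √(2 * π) else 0)) := by
  have hlog : log (S / K) / σ = 0 ↔ S = K := by
    rw [div_eq_zero_iff, or_iff_left hσ, ← log_one,
      log_injOn_pos.eq_iff (div_pos hS hK) (mem_Ioi.2 one_pos), div_eq_one_iff_eq hK.ne']
  have hpdf := (tendsto_stdPDF_div_add_mul (log (S / K) / σ) ((r + σ ^ 2 / 2) / σ)).const_mul
    (S * σ)
  have hdiscount : Tendsto (fun t : ℝ => 2 * t * r * K * exp (-r * t ^ 2)) (𝓝[>] 0) (𝓝 0) := by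
    have hcont : Continuous fun t : ℝ => 2 * t * r * K * exp (-r * t ^ 2) := by fun_prop
    simpa using (hcont.tendsto 0).mono_left nhdsWithin_le_nhds
  have hcdf := hdiscount.zero_mul_isBoundedUnder_le
    (isBoundedUnder_of ⟨1, fun t => abs_stdCDF_le_one (timeChangedD₁ S K r σ t - σ * t)⟩)
  have hlim := hpdf.add hcdf
  simp only [hlog, ← timeChangedD₁_eq hσ, stdPDF_zero] at hlim
  convert hlim using 2
  · rfl
  · split_ifs <;> simp only [div_eq_mul_inv, mul_zero, add_zero]

end TimeChangedBlackScholes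

/-- the time-changed Black–Scholes call value
`C̃(t̃) = S Φ(d₁(t̃)) − K e^{−rt̃²} Φ(d₂(t̃))` has derivative
`C̃′(t̃) = Sσφ(d₁(t̃)) + 2t̃rK e^{−rt̃²} Φ(d₂(t̃))` on `(0,∞)`, and `C̃′` has a finite
limit as `t̃ → 0⁺`, namely `0` if `S ≠ K` and `Sσ/√(2π)` if `S = K`. -/
theorem stmt18 (K σ S r : ℝ) (hK : 0 < K) (hσ : 0 < σ) (hS : 0 < S)
    (d₁ d₂ C : ℝ → ℝ)
    (hd₁ : ∀ t : ℝ, d₁ t = (Real.log (S / K) + (r + σ ^ 2 / 2) * t ^ 2) / (σ * t))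
    (hd₂ : ∀ t : ℝ, d₂ t = d₁ t - σ * t)
    (hC : ∀ t : ℝ, C t = S * stdCDF (d₁ t) - K * Real.exp (-r * t ^ 2) * stdCDF (d₂ t)) :
    (∀ t : ℝ, 0 < t →
      HasDerivAt C
        (S * σ * stdPDF (d₁ t) + 2 * t * r * K * Real.exp (-r * t ^ 2) * stdCDF (d₂ t)) t) ∧
    Filter.Tendsto (deriv C) (nhdsWithin 0 (Set.Ioi 0))
      (nhds (if S = K then S * σ / Real.sqrt (2 * Real.pi) else 0)) := by
  obtain rfl : d₁ = timeChangedD₁ S K r σ := funext hd₁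
  obtain rfl : d₂ = fun t => timeChangedD₁ S K r σ t - σ * t := funext hd₂
  obtain rfl : C = timeChangedCall S K r σ := funext hC
  have hderiv : ∀ t : ℝ, 0 < t → HasDerivAt (timeChangedCall S K r σ)
      (timeChangedTheta S K r σ t) t := fun t ht =>
    hasDerivAt_timeChangedCall hS hK hσ.ne' ht.ne'
  refine ⟨hderiv, (tendsto_timeChangedTheta (r := r) hS hK hσ.ne').congr' ?_⟩
  filter_upwards [self_mem_nhdsWithin] with t ht using ((hderiv t ht).deriv).symm
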